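/- Let K be a field with char(K) ≠ 2. Then the ring automorphism η of S = K[x_1,...,x_n,y_1,...,y_n] defined by η(x_i) = x_i + y_i and η(y_i) = x_i - y_i maps the parity binomial edge ideal I_G = (x_i x_j - y_i y_j : {i,j} ∈ E(G)) onto the permanental edge ideal Π_G = (x_i y_j + x_j y_i : {i,j} ∈ E(G)), for any graph G on [n]. -/
import Mathlib


open MvPolynomial

noncomputable section

/-- The parity binomial edge ideal `I_G = (x_i x_j - y_i y_j : {i,j} ∈ E(G))`. -/
def parityIdeal {V : Type*} (K : Type*) [Field K] (G : SimpleGraph V) :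
    Ideal (MvPolynomial (V ⊕ V) K) :=
  Ideal.span {f | ∃ i j, G.Adj i j ∧
    f = X (Sum.inl i) * X (Sum.inl j) - X (Sum.inr i) * X (Sum.inr j)}

/-- The permanental edge ideal `Π_G = (x_i y_j + x_j y_i : {i,j} ∈ E(G))`. -/
def permIdeal {V : Type*} (K : Type*) [Field K] (G : SimpleGraph V) :
    Ideal (MvPolynomial (V ⊕ V) K) :=
  Ideal.span {f | ∃ i j, G.Adj i j ∧
    f = X (Sum.inl i) * X (Sum.inr j) + X (Sum.inl j) * X (Sum.inr i)}

/-- If `char K ≠ 2`, the automorphism `η : x_i ↦ x_i + y_i, y_i ↦ x_i - y_i` maps the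
parity binomial edge ideal `I_G` onto the permanental edge ideal `Π_G`, for any graph `G`. -/
theorem eta_maps_parityIdeal_to_permIdeal
    (n : ℕ) (K : Type*) [Field K] (hchar : ringChar K ≠ 2)
    (G : SimpleGraph (Fin n)) :
    Ideal.map
      (MvPolynomial.aeval (fun v : Fin n ⊕ Fin n =>
        match v with
        | Sum.inl i => X (Sum.inl i) + X (Sum.inr i)
        | Sum.inr i => X (Sum.inl i) - X (Sum.inr i)) :
        MvPolynomial (Fin n ⊕ Fin n) K →ₐ[K] MvPolynomial (Fin n ⊕ Fin n) K)
      (parityIdeal K G) = permIdeal K G := by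
  have h2 : (2 : K) ≠ 0 := by
    intro h
    have hd : ringChar K ∣ 2 := (ringChar.spec K 2).1 (by exact_mod_cast h)
    rcases (Nat.dvd_prime Nat.prime_two).1 hd with h1 | h2'
    · have : ((1 : ℕ) : K) = 0 := (ringChar.spec K 1).2 (h1 ▸ dvd_refl _)
      simp at this
    · exact hchar h2'
  set η := (MvPolynomial.aeval (fun v : Fin n ⊕ Fin n =>
        match v with
        | Sum.inl i => X (Sum.inl i) + X (Sum.inr i)
        | Sum.inr i => X (Sum.inl i) - X (Sum.inr i)) :
        MvPolynomial (Fin n ⊕ Fin n) K →ₐ[K] MvPolynomial (Fin n ⊕ Fin n) K)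
  have key : ∀ i j : Fin n,
      η (X (Sum.inl i) * X (Sum.inl j) - X (Sum.inr i) * X (Sum.inr j)) =
        C (2 : K) * (X (Sum.inl i) * X (Sum.inr j) + X (Sum.inl j) * X (Sum.inr i)) := by
    intro i j
    simp only [η, map_sub, map_mul, aeval_X]
    ring_nf
    simp [C_eq_smul_one, two_smul]
    ring
  rw [parityIdeal, Ideal.map_span, permIdeal]
  apply le_antisymm
  · apply Ideal.span_le.2
    rintro _ ⟨f, ⟨i, j, hij, rfl⟩, rfl⟩
    rw [key i j]
    exact Ideal.mul_mem_left _ _ (Ideal.subset_span ⟨i, j, hij, rfl⟩)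
  · apply Ideal.span_le.2
    rintro _ ⟨i, j, hij, rfl⟩
    have : (X (Sum.inl i) * X (Sum.inr j) + X (Sum.inl j) * X (Sum.inr i) :
        MvPolynomial (Fin n ⊕ Fin n) K) =
        C (2 : K)⁻¹ * η (X (Sum.inl i) * X (Sum.inl j) - X (Sum.inr i) * X (Sum.inr j)) := by
      rw [key i j, ← mul_assoc, ← C_mul, inv_mul_cancel₀ h2, C_1, one_mul]
    rw [this]
    exact Ideal.mul_mem_left _ _ (Ideal.subset_span ⟨_, ⟨i, j, hij, rfl⟩, rfl⟩)
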